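/- arXiv:1311.2123 — 5 statements merged into one kernel-verified Lean document; each statement's English description precedes it below -/
import Mathlib

section
/- Let F be a finite field with |F| = q and let m, n be positive integers with n ≤ m. If A is a random m×n matrix whose entries are chosen independently and uniformly at random from F, then the probability that A does not have full column rank satisfies Pr[rank(A) < n] ≤ 1/((q−1)·q^(m−n)). -/
/-!
Choosing the columns one at a time, the `i`-th column must avoid the span of the previous ones,
so exactly `∏_{i<n} (q^m - q^i)` matrices have full column rank. By the Weierstrass product
inequality `∏ (1 - x_i) ≥ 1 - ∑ x_i`, the probability of a rank defect is at most
`∑_{i<n} q^(i-m) = (q^n - 1) / ((q - 1) q^m) < 1 / ((q - 1) q^(m-n))`.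
-/

open Finset

theorem Finset.mul_pow_card_sub_prod_sub_le {ι R : Type*} [CommRing R] [LinearOrder R]
    [IsStrictOrderedRing R] (s : Finset ι) (a : R) (b : ι → R)
    (hb₀ : ∀ i ∈ s, 0 ≤ b i) (hba : ∀ i ∈ s, b i ≤ a) :
    a * (a ^ #s - ∏ i ∈ s, (a - b i)) ≤ a ^ #s * ∑ i ∈ s, b i := by
  classical
  induction s using Finset.induction with
  | empty => simp
  | @insert j s hj ih =>
    have hbj₀ := hb₀ j (mem_insert_self j s)
    have ha : 0 ≤ a := hbj₀.trans (hba j (mem_insert_self j s))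
    have ih := ih (fun i hi => hb₀ i (mem_insert_of_mem hi))
      (fun i hi => hba i (mem_insert_of_mem hi))
    have hprod : ∏ i ∈ s, (a - b i) ≤ a ^ #s := by
      simpa using prod_le_prod (fun i hi => sub_nonneg.2 (hba i (mem_insert_of_mem hi)))
        (fun i hi => sub_le_self a (hb₀ i (mem_insert_of_mem hi)))
    rw [card_insert_of_notMem hj, prod_insert hj, sum_insert hj, pow_succ]
    nlinarith [mul_le_mul_of_nonneg_left ih ha,
      mul_le_mul_of_nonneg_left hprod (mul_nonneg ha hbj₀)]

namespace Matrix

theorem natCard_eq {m n α : Type*} [Fintype m] [Fintype n] :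
    Nat.card (Matrix m n α) = Nat.card α ^ (Fintype.card m * Fintype.card n) := by
  rw [Nat.card_congr of.symm, Nat.card_fun, Nat.card_fun, ← pow_mul, mul_comm]
  simp

theorem rank_eq_card_iff_linearIndependent_col {m n K : Type*} [Field K] [Fintype n]
    (A : Matrix m n K) : A.rank = Fintype.card n ↔ LinearIndependent K A.col := by
  rw [rank_eq_finrank_span_cols, linearIndependent_iff_card_eq_finrank_span, Set.finrank, eq_comm]

theorem rank_lt_iff_not_linearIndependent_col {m n K : Type*} [Field K] [Fintype m] [Fintype n]
    (A : Matrix m n K) : A.rank < Fintype.card n ↔ ¬ LinearIndependent K A.col := by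
  rw [← rank_eq_card_iff_linearIndependent_col, lt_iff_le_and_ne]
  exact and_iff_right A.rank_le_card_width

theorem card_linearIndependent_col {m K : Type*} [Field K] [Fintype K] [Fintype m]
    {n : ℕ} (hn : n ≤ Fintype.card m) :
    Nat.card {A : Matrix m (Fin n) K // LinearIndependent K A.col} =
      ∏ i : Fin n, (Fintype.card K ^ Fintype.card m - Fintype.card K ^ (i : ℕ)) := by
  let e : {A : Matrix m (Fin n) K // LinearIndependent K A.col} ≃
      {s : Fin n → m → K // LinearIndependent K s} :=
    { toFun A := ⟨A.1.col, A.2⟩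
      invFun s := ⟨(of s.1)ᵀ, s.2⟩ }
  rw [Nat.card_congr e, card_linearIndependent (by rwa [Module.finrank_fintype_fun_eq_card])]
  simp only [Module.finrank_fintype_fun_eq_card]

theorem card_rank_lt_add_prod {m K : Type*} [Field K] [Fintype K] [Fintype m]
    {n : ℕ} (hn : n ≤ Fintype.card m) :
    Nat.card {A : Matrix m (Fin n) K // A.rank < n} +
        ∏ i : Fin n, (Fintype.card K ^ Fintype.card m - Fintype.card K ^ (i : ℕ)) =
      Fintype.card K ^ (Fintype.card m * n) := by
  classical
  have hrank (A : Matrix m (Fin n) K) : A.rank < n ↔ ¬ LinearIndependent K A.col := by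
    simpa using A.rank_lt_iff_not_linearIndependent_col
  rw [← card_linearIndependent_col hn, Nat.card_congr (Equiv.subtypeEquivRight hrank), add_comm,
    ← Nat.card_sum, Nat.card_congr (Equiv.sumCompl _), natCard_eq]
  simp

end Matrix

theorem pow_mul_sub_prod_pow_sub_pow_mul_le {q : ℝ} (hq : 1 ≤ q) {m n : ℕ} (hmn : n ≤ m) :
    (q ^ (m * n) - ∏ i : Fin n, (q ^ m - q ^ (i : ℕ))) * ((q - 1) * q ^ (m - n)) ≤
      q ^ (m * n) := by
  set X := q ^ (m * n) - ∏ i : Fin n, (q ^ m - q ^ (i : ℕ))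
  have hweierstrass : q ^ m * X ≤ q ^ (m * n) * ∑ i : Fin n, q ^ (i : ℕ) := by
    simpa [X, ← pow_mul] using univ.mul_pow_card_sub_prod_sub_le (q ^ m)
      (fun i : Fin n => q ^ (i : ℕ)) (fun i _ => by positivity)
      (fun i _ => pow_le_pow_right₀ hq (i.2.le.trans hmn))
  have hgeom : (∑ i : Fin n, q ^ (i : ℕ)) * (q - 1) = q ^ n - 1 := by
    rw [Fin.sum_univ_eq_sum_range]
    exact geom_sum_mul q n
  have hsplit : q ^ (m - n) * q ^ n = q ^ m := by rw [← pow_add, Nat.sub_add_cancel hmn]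
  refine le_of_mul_le_mul_right ?_ (by positivity : 0 < q ^ n)
  calc X * ((q - 1) * q ^ (m - n)) * q ^ n = q ^ m * X * (q - 1) := by rw [← hsplit]; ring
    _ ≤ q ^ (m * n) * (∑ i : Fin n, q ^ (i : ℕ)) * (q - 1) :=
      mul_le_mul_of_nonneg_right hweierstrass (sub_nonneg.2 hq)
    _ = q ^ (m * n) * (q ^ n - 1) := by rw [mul_assoc, hgeom]
    _ ≤ q ^ (m * n) * q ^ n := by gcongr; linarith

theorem stmt_0_general (F : Type) [Field F] [Fintype F] (q m n : ℕ)
    (hq : Fintype.card F = q) (hmn : n ≤ m) :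
    (Nat.card {A : Matrix (Fin m) (Fin n) F // A.rank < n} : ℝ) /
      (Nat.card (Matrix (Fin m) (Fin n) F) : ℝ) ≤
      1 / (((q : ℝ) - 1) * (q : ℝ) ^ (m - n)) := by
  subst hq
  have hq : (1 : ℝ) < Fintype.card F := by exact_mod_cast Fintype.one_lt_card
  have hbad : (Nat.card {A : Matrix (Fin m) (Fin n) F // A.rank < n} : ℝ) =
      (Fintype.card F : ℝ) ^ (m * n) -
        ∏ i : Fin n, ((Fintype.card F : ℝ) ^ m - (Fintype.card F : ℝ) ^ (i : ℕ)) := by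
    have hle (i : Fin n) : Fintype.card F ^ (i : ℕ) ≤ Fintype.card F ^ m :=
      Nat.pow_le_pow_right Fintype.card_pos (i.2.le.trans hmn)
    have h := congrArg (Nat.cast (R := ℝ))
      (Matrix.card_rank_lt_add_prod (K := F) (m := Fin m) (by simpa using hmn))
    push_cast [Nat.cast_sub (hle _), Fintype.card_fin] at h
    linarith
  have htot : (Nat.card (Matrix (Fin m) (Fin n) F) : ℝ) = (Fintype.card F : ℝ) ^ (m * n) := by
    rw [Matrix.natCard_eq]
    simp
  have hden : 0 < ((Fintype.card F : ℝ) - 1) * (Fintype.card F : ℝ) ^ (m - n) := by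
    have := sub_pos.2 hq
    positivity
  rw [hbad, htot, div_le_div_iff₀ (by positivity) hden, one_mul]
  exact pow_mul_sub_prod_pow_sub_pow_mul_le hq.le hmn

/-- If `A` is a uniformly random `m × n` matrix over a finite field `F` with `|F| = q`
and `n ≤ m`, then `Pr[rank A < n] ≤ 1 / ((q - 1) * q ^ (m - n))`. -/
theorem stmt_0 (F : Type) [Field F] [Fintype F] (q m n : ℕ)
    (hq : Fintype.card F = q) (hm : 0 < m) (hn : 0 < n) (hmn : n ≤ m) :
    (Nat.card {A : Matrix (Fin m) (Fin n) F // A.rank < n} : ℝ) /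
      (Nat.card (Matrix (Fin m) (Fin n) F) : ℝ) ≤
      1 / (((q : ℝ) - 1) * (q : ℝ) ^ (m - n)) :=
  stmt_0_general F q m n hq hmn
end

section
/- In the packet reception model with parameters m, n, g and finite field F, for every i ∈ {0, 1, …, g−1} and every ε > 0 there exists q0 such that for every finite field F with |F| ≥ q0, |Pr[rank of generation 1 = i] − C(m,i)·(1/n)^i·(1−1/n)^(m−i)| < ε. That is, as the field size tends to infinity, the probability that a fixed generation has rank i (for i < g) converges to the binomial probability that exactly i of the m packets are assigned to that generation. -/
/-!
Call a packet of generation `j` non-innovative if its coefficient vector lies in the span of the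
earlier packets of generation `j` although these do not yet span `F^g`. Without non-innovative
packets the rank of generation `j` is `min K g`, where `K` is the number of its packets, so for
`i < g` the events `rank = i` and `K = i` differ only on configurations with a non-innovative
packet. Given the other packets, at most `q^(g-1)` of the `n q^g` values of a packet make it
non-innovative, so a union bound gives such configurations probability at most `m / q`, while
`K = i` has exactly the binomial probability.
-/

/-- In the packet reception model, a configuration assigns to each of the `m` received
packets a generation index in `Fin n` and a coefficient vector in `Fin g → F`.
The rank of generation `j` is the rank of the matrix over `F` whose rows are the
coefficient vectors of the packets assigned to generation `j`. -/
noncomputable def genRank (m n g : ℕ) (F : Type*) [Field F]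
    (ω : Fin m → Fin n × (Fin g → F)) (j : Fin n) : ℕ :=
  (Matrix.of fun (p : {p : Fin m // (ω p).1 = j}) (k : Fin g) => (ω p.1).2 k).rank

open Module Submodule Finset

theorem min_card_finrank_le_finrank_span {ι K V : Type*} [LinearOrder ι] [DivisionRing K]
    [AddCommGroup V] [Module K V] [FiniteDimensional K V] (v : ι → V) (s : Finset ι)
    (h : ∀ a ∈ s, v a ∈ span K (v '' {b | b ∈ s ∧ b < a}) →
      span K (v '' {b | b ∈ s ∧ b < a}) = ⊤) :
    min #s (finrank K V) ≤ finrank K (span K (v '' s)) := by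
  induction s using Finset.induction_on_max with
  | empty => simp
  | insert a s hlt ih =>
    have hbefore : ∀ b ∈ s, {c | c ∈ insert a s ∧ c < b} = {c | c ∈ s ∧ c < b} := by
      intro b hb
      ext c
      have := hlt b hb
      grind
    have hs : {c | c ∈ insert a s ∧ c < a} = s := by
      ext c
      have := hlt c
      grind
    have ih := ih fun b hb => by
      simpa only [hbefore b hb] using h b (mem_insert_of_mem hb)
    have ha := h a (mem_insert_self a s)
    rw [hs] at ha
    have hspan : span K (v '' ↑(insert a s)) = span K (v '' s) ⊔ span K {v a} := by
      rw [coe_insert, Set.image_insert_eq, span_insert, sup_comm]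
    by_cases hva : v a ∈ span K (v '' s)
    · rw [hspan, ha hva, top_sup_eq, finrank_top]
      exact min_le_right _ _
    · rw [hspan, finrank_sup_span_singleton hva]
      have := card_insert_le a s
      omega

theorem natCard_le_pow_finrank_sub_one_of_ne_top {K V : Type*} [DivisionRing K] [Finite K]
    [AddCommGroup V] [Module K V] [FiniteDimensional K V] {W : Submodule K V} (hW : W ≠ ⊤) :
    Nat.card W ≤ Nat.card K ^ (finrank K V - 1) := by
  rw [Module.natCard_eq_pow_finrank (K := K)]
  have := Submodule.finrank_lt hW
  exact Nat.pow_le_pow_right Nat.card_pos (by omega)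

theorem card_filter_apply_mem_mul_card_le {ι X : Type*} [Fintype ι] [DecidableEq ι]
    [Fintype X] [DecidableEq X] (p : ι) (A : (ι → X) → Finset X)
    (hA : ∀ f x, A (Function.update f p x) = A f) {c : ℕ} (hc : ∀ f, #(A f) ≤ c) :
    #{f | f p ∈ A f} * Fintype.card X ≤ c * Fintype.card (ι → X) := by
  set S : Finset (ι → X) := {f | f p ∈ A f}
  -- Resampling the `p`-th coordinate: since `A` ignores it, `swap` maps `S × X` into the
  -- pairs `(f, x)` with `x ∈ A f`, and it is injective.
  let swap : (ι → X) × X → Σ _ : ι → X, X := fun fx =>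
    ⟨Function.update fx.1 p fx.2, fx.1 p⟩
  have hmaps : Set.MapsTo swap ↑(S ×ˢ (univ : Finset X)) ↑(univ.sigma A) := by
    rintro ⟨f, x⟩ hf
    simp_all [S, swap]
  have hinj : Set.InjOn swap ↑(S ×ˢ (univ : Finset X)) := by
    rintro ⟨f, x⟩ - ⟨f', x'⟩ - h
    simp only [swap, Sigma.mk.injEq, heq_eq_eq] at h
    obtain ⟨hupd, hp⟩ := h
    have hx : x = x' := by simpa using congrFun hupd p
    subst hx
    refine Prod.ext (funext fun q => ?_) rfl
    by_cases hq : q = p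
    · exact hq ▸ hp
    · simpa [hq] using congrFun hupd q
  calc #S * Fintype.card X = #(S ×ˢ (univ : Finset X)) := by
        rw [card_product, card_univ]
    _ ≤ #(univ.sigma A) := card_le_card_of_injOn swap hmaps hinj
    _ = ∑ f, #(A f) := card_sigma _ _
    _ ≤ ∑ _f : ι → X, c := sum_le_sum fun f _ => hc f
    _ = c * Fintype.card (ι → X) := by rw [sum_const, card_univ, smul_eq_mul, mul_comm]

theorem card_filter_le_card_filter_add_card_filter {α : Type*} [Fintype α] {P Q R : α → Prop}
    [DecidablePred P] [DecidablePred Q] [DecidablePred R] (h : ∀ x, P x → ¬R x → Q x) :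
    #{x | P x} ≤ #{x | Q x} + #{x | R x} := by
  classical
  calc #{x | P x} ≤ #{x | Q x ∨ R x} := card_le_card fun x => by
        simp only [mem_filter, mem_univ, true_and]
        exact fun hP => (em (R x)).elim Or.inr fun hR => Or.inl (h x hP hR)
    _ ≤ #{x | Q x} + #{x | R x} := by
        rw [filter_or]
        exact card_union_le _ _

theorem abs_card_filter_sub_card_filter_le {α : Type*} [Fintype α] {P Q R : α → Prop}
    [DecidablePred P] [DecidablePred Q] [DecidablePred R] (h : ∀ x, ¬R x → (P x ↔ Q x)) :
    |(#{x | P x} : ℝ) - #{x | Q x}| ≤ #{x | R x} := by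
  have hPQ : #{x | P x} ≤ #{x | Q x} + #{x | R x} :=
    card_filter_le_card_filter_add_card_filter fun x hP hR => (h x hR).1 hP
  have hQP : #{x | Q x} ≤ #{x | P x} + #{x | R x} :=
    card_filter_le_card_filter_add_card_filter fun x hQ hR => (h x hR).2 hQ
  rw [abs_sub_le_iff, sub_le_iff_le_add', sub_le_iff_le_add']
  exact ⟨mod_cast hPQ, mod_cast hQP⟩

theorem card_filter_preimage_singleton_eq {ι κ : Type*} [Fintype ι] [DecidableEq ι] [Fintype κ]
    [DecidableEq κ] (j : κ) (S : Finset ι) :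
    #{a : ι → κ | ({p | a p = j} : Finset ι) = S} =
      (Fintype.card κ - 1) ^ (Fintype.card ι - #S) := by
  have hchoices (p : ι) : Fintype.card {x : κ // x = j ↔ p ∈ S} =
      if p ∈ S then 1 else Fintype.card κ - 1 := by
    split_ifs with hp <;> simp [hp, Fintype.card_subtype_compl]
  rw [← Fintype.card_subtype]
  calc Fintype.card {a : ι → κ // ({p | a p = j} : Finset ι) = S}
      = Fintype.card (∀ p, {x : κ // x = j ↔ p ∈ S}) :=
        Fintype.card_congr <| (Equiv.subtypeEquivRight fun a => by simp [Finset.ext_iff]).trans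
          (Equiv.subtypePiEquivPi (p := fun p x => x = j ↔ p ∈ S))
    _ = _ := by
      rw [Fintype.card_pi]
      simp only [hchoices]
      rw [prod_ite, prod_const_one, one_mul, prod_const, filter_notMem_eq_sdiff,
        card_sdiff_of_subset (subset_univ _), card_univ]

theorem card_filter_card_preimage_singleton_eq {ι κ : Type*} [Fintype ι] [DecidableEq ι]
    [Fintype κ] [DecidableEq κ] (j : κ) (i : ℕ) :
    #{a : ι → κ | #{p | a p = j} = i} =
      (Fintype.card ι).choose i * (Fintype.card κ - 1) ^ (Fintype.card ι - i) := by
  rw [card_eq_sum_card_fiberwise (f := fun a : ι → κ => ({p | a p = j} : Finset ι))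
    (t := powersetCard i univ) (fun a ha => by simpa using ha)]
  have hfiber : ∀ S ∈ powersetCard i (univ : Finset ι),
      #{a ∈ {a : ι → κ | #{p | a p = j} = i} | ({p | a p = j} : Finset ι) = S} =
        (Fintype.card κ - 1) ^ (Fintype.card ι - i) := by
    intro S hS
    rw [mem_powersetCard_univ] at hS
    rw [← hS, ← card_filter_preimage_singleton_eq j S, filter_filter]
    exact congrArg card (filter_congr fun a _ => by grind)
  rw [sum_congr rfl hfiber, sum_const, card_powersetCard, card_univ, smul_eq_mul]

theorem card_filter_comp_fst {ι α β : Type*} [Fintype ι] [DecidableEq ι] [Fintype α]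
    [Fintype β] (P : (ι → α) → Prop) [DecidablePred P] :
    #{ω : ι → α × β | P fun p => (ω p).1} = #{a | P a} * Fintype.card (ι → β) := by
  rw [← Fintype.card_subtype, ← Fintype.card_subtype, ← Fintype.card_prod]
  exact Fintype.card_congr <|
    ((Equiv.arrowProdEquivProdArrow ι (fun _ => α) (fun _ => β)).subtypeEquiv
      fun _ => Iff.rfl).trans Equiv.prodSubtypeFstEquivSubtypeProd

theorem choose_mul_sub_one_pow_div_pow (m n i : ℕ) (hn : 0 < n) :
    ((m.choose i * (n - 1) ^ (m - i) : ℕ) : ℝ) / (n : ℝ) ^ m =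
      m.choose i * (1 / n) ^ i * (1 - 1 / n) ^ (m - i) := by
  rcases lt_or_ge m i with him | him
  · simp [Nat.choose_eq_zero_of_lt him]
  · obtain ⟨k, rfl⟩ := Nat.exists_eq_add_of_le him
    have hn' : (n : ℝ) ≠ 0 := by positivity
    rw [Nat.add_sub_cancel_left, pow_add, one_sub_div hn', div_pow, div_pow, one_pow]
    push_cast [Nat.cast_sub hn]
    field_simp

theorem card_filter_card_fst_eq_div {ι κ β : Type*} [Fintype ι] [DecidableEq ι] [Fintype κ]
    [DecidableEq κ] [Fintype β] [Nonempty β] (j : κ) (i : ℕ) :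
    (#{ω : ι → κ × β | #{p | (ω p).1 = j} = i} : ℝ) / Fintype.card (ι → κ × β) =
      (Fintype.card ι).choose i * (1 / Fintype.card κ) ^ i *
        (1 - 1 / Fintype.card κ) ^ (Fintype.card ι - i) := by
  rw [card_filter_comp_fst (fun a : ι → κ => #{p | a p = j} = i),
    card_filter_card_preimage_singleton_eq,
    ← choose_mul_sub_one_pow_div_pow _ _ _ (Fintype.card_pos_iff.2 ⟨j⟩)]
  simp only [Fintype.card_fun, Fintype.card_prod, Nat.cast_mul, Nat.cast_pow, mul_pow]
  have : (Fintype.card β : ℝ) ^ Fintype.card ι ≠ 0 := by positivity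
  field_simp

section PacketModel
variable {F : Type*} [Field F] {m n g : ℕ}

local notation "Config" => Fin m → Fin n × (Fin g → F)

theorem genRank_eq_finrank_span (ω : Config) (j : Fin n) :
    genRank m n g F ω j = finrank F (span F ((fun p => (ω p).2) '' {p | (ω p).1 = j})) := by
  rw [genRank, Matrix.rank_eq_finrank_span_row, ← Subtype.range_coe_subtype, ← Set.range_comp]
  rfl

theorem genRank_le_card (ω : Config) (j : Fin n) :
    genRank m n g F ω j ≤ #{p | (ω p).1 = j} :=
  (Matrix.rank_le_card_height _).trans (Fintype.card_subtype _).le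

def earlierSpan (j : Fin n) (p : Fin m) (ω : Config) :
    Submodule F (Fin g → F) :=
  span F ((fun q => (ω q).2) '' {q | (ω q).1 = j ∧ q < p})

def IsNonInnovative (j : Fin n) (p : Fin m) (ω : Config) : Prop :=
  (ω p).1 = j ∧ (ω p).2 ∈ earlierSpan j p ω ∧ earlierSpan j p ω ≠ ⊤

theorem min_card_le_genRank {ω : Config} {j : Fin n}
    (h : ∀ p, ¬IsNonInnovative j p ω) : min #{p | (ω p).1 = j} g ≤ genRank m n g F ω j := by
  have := min_card_finrank_le_finrank_span (K := F) (fun p => (ω p).2) {p | (ω p).1 = j}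
    fun p hp hmem => ?_
  · rwa [coe_filter_univ, finrank_fin_fun, ← genRank_eq_finrank_span] at this
  · simp only [mem_filter, mem_univ, true_and] at hp hmem ⊢
    by_contra htop
    exact h p ⟨hp, hmem, htop⟩

theorem genRank_eq_iff_card_eq {ω : Config} {j : Fin n} {i : ℕ} (hi : i < g)
    (h : ∀ p, ¬IsNonInnovative j p ω) :
    genRank m n g F ω j = i ↔ #{p | (ω p).1 = j} = i := by
  have := min_card_le_genRank h
  have := genRank_le_card ω j
  omega

theorem earlierSpan_update (j : Fin n) (p : Fin m) (ω : Config) (x : Fin n × (Fin g → F)) :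
    earlierSpan j p (Function.update ω p x) = earlierSpan j p ω := by
  have hω : ∀ q < p, Function.update ω p x q = ω q := fun q hq =>
    Function.update_of_ne hq.ne _ _
  unfold earlierSpan
  congr 1
  ext v
  constructor <;> rintro ⟨q, ⟨hqj, hqp⟩, rfl⟩ <;> exact ⟨q, by simp_all⟩

open scoped Classical in
theorem card_isNonInnovative_mul_le [Fintype F] (hg : 0 < g) (j : Fin n) (p : Fin m) :
    #{ω : Config | IsNonInnovative j p ω} * Fintype.card F ≤ Fintype.card Config := by
  set q := Fintype.card F
  let A : Config → Finset (Fin n × (Fin g → F)) := fun ω =>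
    {x | x.1 = j ∧ x.2 ∈ earlierSpan j p ω ∧ earlierSpan j p ω ≠ ⊤}
  have hA : ∀ ω, #(A ω) ≤ q ^ (g - 1) := by
    intro ω
    by_cases htop : earlierSpan j p ω = ⊤
    · simp [A, htop]
    calc #(A ω) ≤ #{v | v ∈ earlierSpan j p ω} :=
          card_le_card_of_injOn Prod.snd (fun x hx => by simp_all [A]) fun x hx y hy hxy => by
            simp_all [A, Prod.ext_iff]
      _ = Nat.card (earlierSpan j p ω) := by rw [Nat.card_eq_fintype_card, Fintype.card_subtype]
      _ ≤ q ^ (g - 1) := by simpa using natCard_le_pow_finrank_sub_one_of_ne_top htop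
  have hS : #{ω | ω p ∈ A ω} = #{ω : Config | IsNonInnovative j p ω} := by
    congr 1
    ext ω
    rw [mem_filter, mem_filter, mem_filter]
    simp [IsNonInnovative]
  have key := card_filter_apply_mem_mul_card_le p A
    (fun ω x => by simp only [A, earlierSpan_update]) hA
  rw [hS, show Fintype.card (Fin n × (Fin g → F)) = n * q ^ g by simp [q]] at key
  have hpos : 0 < n * q ^ (g - 1) := Nat.mul_pos j.pos (Nat.pow_pos Fintype.card_pos)
  refine Nat.le_of_mul_le_mul_right ?_ hpos
  calc _ = #{ω : Config | IsNonInnovative j p ω} * (n * q ^ g) := by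
        rw [← Nat.sub_add_cancel hg, pow_succ, Nat.add_sub_cancel]
        ring
    _ ≤ q ^ (g - 1) * Fintype.card Config := key
    _ ≤ Fintype.card Config * (n * q ^ (g - 1)) := by
        rw [mul_comm]
        exact Nat.mul_le_mul_left _ (Nat.le_mul_of_pos_left _ j.pos)

open scoped Classical in
theorem card_exists_isNonInnovative_mul_le [Fintype F] (hg : 0 < g) (j : Fin n) :
    #{ω : Config | ∃ p, IsNonInnovative j p ω} * Fintype.card F ≤
      m * Fintype.card Config := by
  have hunion : #{ω : Config | ∃ p, IsNonInnovative j p ω} ≤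
      ∑ p : Fin m, #{ω : Config | IsNonInnovative j p ω} :=
    (card_le_card fun ω => by simp).trans card_biUnion_le
  calc _ ≤ ∑ p : Fin m, #{ω : Config | IsNonInnovative j p ω} * Fintype.card F := by
        rw [← sum_mul]
        gcongr
    _ ≤ ∑ _p : Fin m, Fintype.card Config :=
        sum_le_sum fun p _ => card_isNonInnovative_mul_le hg j p
    _ = _ := by rw [sum_const, card_univ, Fintype.card_fin, smul_eq_mul]

end PacketModel

theorem stmt_2_general (m n g : ℕ) (hn : 0 < n) (hg : 0 < g)
    (i : ℕ) (hi : i < g) (ε : ℝ) (hε : 0 < ε) :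
    ∃ q0 : ℕ, ∀ (F : Type) [Field F] [Fintype F], q0 ≤ Fintype.card F →
      |(Nat.card {ω : Fin m → Fin n × (Fin g → F) //
            genRank m n g F ω ⟨0, hn⟩ = i} : ℝ) /
          (Nat.card (Fin m → Fin n × (Fin g → F)) : ℝ) -
        (m.choose i : ℝ) * (1 / n) ^ i * (1 - 1 / n) ^ (m - i)| < ε := by
  classical
  refine ⟨⌈m / ε⌉₊ + 1, fun F _ _ hq => ?_⟩
  set j : Fin n := ⟨0, hn⟩
  set N := Fintype.card (Fin m → Fin n × (Fin g → F))
  have hN : (0 : ℝ) < N := mod_cast Fintype.card_pos_iff.2 ⟨fun _ => (j, 0)⟩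
  have hmq : (m : ℝ) < ε * Fintype.card F := by
    rw [← div_lt_iff₀' hε]
    exact Nat.lt_of_ceil_lt (Nat.lt_of_succ_le hq)
  have hbinom := card_filter_card_fst_eq_div (ι := Fin m) (β := Fin g → F) j i
  simp only [Fintype.card_fin] at hbinom
  have hdiff := abs_card_filter_sub_card_filter_le
    (P := fun ω => genRank m n g F ω j = i) (Q := fun ω => #{p | (ω p).1 = j} = i)
    (R := fun ω => ∃ p, IsNonInnovative j p ω)
    fun ω h => genRank_eq_iff_card_eq hi (not_exists.1 h)
  have hbad : (#{ω | ∃ p, IsNonInnovative j p ω} : ℝ) * Fintype.card F ≤ m * N :=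
    mod_cast card_exists_isNonInnovative_mul_le hg j
  rw [Nat.card_eq_fintype_card, Nat.card_eq_fintype_card, Fintype.card_subtype, ← hbinom,
    ← sub_div, abs_div, abs_of_pos hN, div_lt_iff₀ hN]
  refine hdiff.trans_lt (lt_of_mul_lt_mul_right ?_ (Nat.cast_nonneg (Fintype.card F)))
  calc _ ≤ (m : ℝ) * N := hbad
    _ < ε * Fintype.card F * N := by gcongr
    _ = ε * N * Fintype.card F := by ring

/-- As the field size tends to infinity, the probability that a fixed generation has
rank `i < g` converges to the binomial probability that exactly `i` of the `m` packets
are assigned to that generation. -/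
theorem stmt_2 (m n g : ℕ) (hm : 0 < m) (hn : 0 < n) (hg : 0 < g)
    (i : ℕ) (hi : i < g) (ε : ℝ) (hε : 0 < ε) :
    ∃ q0 : ℕ, ∀ (F : Type) [Field F] [Fintype F], q0 ≤ Fintype.card F →
      |(Nat.card {ω : Fin m → Fin n × (Fin g → F) //
            genRank m n g F ω ⟨0, hn⟩ = i} : ℝ) /
          (Nat.card (Fin m → Fin n × (Fin g → F)) : ℝ) -
        (m.choose i : ℝ) * (1 / n) ^ i * (1 - 1 / n) ^ (m - i)| < ε :=
  stmt_2_general m n g hn hg i hi ε hε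
end

section
/- In the packet reception model with parameters m, n, g and finite field F, for every ε > 0 there exists q0 such that for every finite field F with |F| ≥ q0, |Pr[rank of generation 1 = g] − Σ_{j=g}^{m} C(m,j)·(1/n)^j·(1−1/n)^(m−j)| < ε. That is, as the field size tends to infinity, the probability that a fixed generation is full rank converges to the binomial probability that at least g of the m packets are assigned to that generation. -/
open Finset

theorem one_sub_div_le_prod_one_sub_pow_div {q : ℝ} (hq : 1 ≤ q) {g d : ℕ} (hgd : g ≤ d) :
    1 - g / q ≤ ∏ i : Fin g, (1 - q ^ (i : ℕ) / q ^ d) := by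
  have hq0 : 0 < q := by linarith
  have hfactor (i : Fin g) : 1 - 1 / q ≤ 1 - q ^ (i : ℕ) / q ^ d := by
    have : q ^ (i : ℕ) * q ≤ q ^ d := by
      rw [← pow_succ]; exact pow_le_pow_right₀ hq (by omega)
    gcongr 1 - ?_
    rw [div_le_div_iff₀ (by positivity) hq0]
    linarith
  have h1q : 0 ≤ 1 - 1 / q := by rw [sub_nonneg, div_le_one hq0]; exact hq
  calc 1 - g / q = 1 + g * (-(1 / q)) := by ring
    _ ≤ (1 + -(1 / q)) ^ g :=
        one_add_mul_le_pow (by linarith [div_le_one_of_le₀ hq hq0.le]) g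
    _ = ∏ _i : Fin g, (1 - 1 / q) := by simp [sub_eq_add_neg]
    _ ≤ ∏ i : Fin g, (1 - q ^ (i : ℕ) / q ^ d) :=
        prod_le_prod (fun _ _ => h1q) fun i _ => hfactor i

theorem Matrix.rank_eq_card_width_iff_linearIndependent_col {ι κ F : Type*} [Field F]
    [Fintype ι] [Fintype κ] (M : Matrix ι κ F) : M.rank = Fintype.card κ ↔ LinearIndependent F M.col := by
  rw [rank_eq_finrank_span_cols, linearIndependent_iff_card_eq_finrank_span, Set.finrank, eq_comm]

noncomputable def fullRankProportion (F ι : Type*) [Field F] [Fintype ι] (g : ℕ) : ℝ :=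
  Nat.card {M : Matrix ι (Fin g) F // M.rank = g} / Nat.card (Matrix ι (Fin g) F)

section FullRankProportion

variable {F ι : Type*} [Field F] [Fintype ι] {g : ℕ}

theorem fullRankProportion_eq_zero (h : Fintype.card ι < g) : fullRankProportion F ι g = 0 := by
  have : IsEmpty {M : Matrix ι (Fin g) F // M.rank = g} :=
    ⟨fun M => (M.2 ▸ M.1.rank_le_card_height).not_gt h⟩
  simp [fullRankProportion]

variable [Fintype F]

theorem fullRankProportion_eq_prod (h : g ≤ Fintype.card ι) :
    fullRankProportion F ι g =
      ∏ i : Fin g, (1 - (Fintype.card F : ℝ) ^ (i : ℕ) / Fintype.card F ^ Fintype.card ι) := by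
  have hcard : Nat.card {M : Matrix ι (Fin g) F // M.rank = g} =
      Nat.card {C : Fin g → ι → F // LinearIndependent F C} := by
    refine Nat.card_congr (Equiv.subtypeEquiv (Equiv.piComm _) fun M => ?_)
    have := M.rank_eq_card_width_iff_linearIndependent_col
    rwa [Fintype.card_fin] at this
  have hmat : Nat.card (Matrix ι (Fin g) F) = ∏ _i : Fin g, Fintype.card F ^ Fintype.card ι := by
    simp [Matrix, Nat.card_fun, ← pow_mul, mul_comm]
  rw [fullRankProportion, hcard, card_linearIndependent (by simpa using h), hmat, Nat.cast_prod,
    Nat.cast_prod, ← prod_div_distrib]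
  refine prod_congr rfl fun i _ => ?_
  rw [Module.finrank_fintype_fun_eq_card,
    Nat.cast_sub (Nat.pow_le_pow_right Fintype.card_pos (by omega)), sub_div,
    div_self (by positivity), Nat.cast_pow, Nat.cast_pow]

theorem fullRankProportion_le_one : fullRankProportion F ι g ≤ 1 :=
  div_le_one_of_le₀ (mod_cast Finite.card_subtype_le _) (Nat.cast_nonneg _)

theorem abs_fullRankProportion_sub_indicator_le :
    |fullRankProportion F ι g - if g ≤ Fintype.card ι then 1 else 0| ≤ g / Fintype.card F := by
  have hq : (1 : ℝ) ≤ Fintype.card F := mod_cast Fintype.card_pos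
  split_ifs with h
  · rw [abs_sub_comm, abs_of_nonneg (sub_nonneg.2 fullRankProportion_le_one)]
    have := fullRankProportion_eq_prod (F := F) h ▸ one_sub_div_le_prod_one_sub_pow_div hq h
    linarith
  · rw [fullRankProportion_eq_zero (not_le.1 h), sub_zero, abs_zero]
    positivity

end FullRankProportion

theorem card_subtype_prod_div {α β : Type*} [Fintype α] [Finite β] (P : α → β → Prop) :
    (Nat.card {x : α × β // P x.1 x.2} : ℝ) / Nat.card (α × β) =
      (∑ a, (Nat.card {b // P a b} : ℝ) / Nat.card β) / Nat.card α := by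
  rw [Nat.card_congr (Equiv.subtypeProdEquivSigmaSubtype P), Nat.card_sigma, Nat.card_prod,
    Nat.cast_sum, Nat.cast_mul, mul_comm, ← div_div, sum_div]

theorem card_subtype_restrict_div {α β : Type*} [Finite α] [Finite β] [Nonempty β]
    (p : α → Prop) (P : ({a // p a} → β) → Prop) :
    (Nat.card {v : α → β // P (Subtype.restrict p v)} : ℝ) / Nat.card (α → β) =
      Nat.card {w // P w} / Nat.card ({a // p a} → β) := by
  classical
  let e := Equiv.piEquivPiSubtypeProd p fun _ => β
  have hsub : {v : α → β // P (Subtype.restrict p v)} ≃ {w // P w} × ({a // ¬p a} → β) :=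
    (e.subtypeEquiv fun _ => Iff.rfl).trans Equiv.prodSubtypeFstEquivSubtypeProd
  rw [Nat.card_congr hsub, Nat.card_congr e, Nat.card_prod, Nat.card_prod, Nat.cast_mul,
    Nat.cast_mul, mul_div_mul_right _ _ (Nat.cast_ne_zero.2 Nat.card_pos.ne')]

theorem abs_sum_div_card_sub_sum_div_card_le {ι : Type*} [Fintype ι] [Nonempty ι]
    {a b : ι → ℝ} {δ : ℝ} (h : ∀ i, |a i - b i| ≤ δ) :
    |(∑ i, a i) / Fintype.card ι - (∑ i, b i) / Fintype.card ι| ≤ δ := by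
  have hcard : (0 : ℝ) < Fintype.card ι := mod_cast Fintype.card_pos
  rw [← sub_div, ← sum_sub_distrib, abs_div, abs_of_pos hcard, div_le_iff₀ hcard]
  calc |∑ i, (a i - b i)| ≤ ∑ i, |a i - b i| := abs_sum_le_sum_abs _ _
    _ ≤ ∑ _i : ι, δ := sum_le_sum fun i _ => h i
    _ = δ * Fintype.card ι := by rw [sum_const, card_univ, nsmul_eq_mul, mul_comm]

theorem card_filter_fiber_eq_pow {α β : Type*} [Fintype α] [DecidableEq α] [Fintype β]
    [DecidableEq β] (b : β) (s : Finset α) :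
    #{f : α → β | ({a | f a = b} : Finset α) = s} =
      (Fintype.card β - 1) ^ (Fintype.card α - #s) := by
  have : ({f : α → β | ({a | f a = b} : Finset α) = s} : Finset (α → β)) =
      Fintype.piFinset fun a => if a ∈ s then {b} else {b}ᶜ := by
    ext f
    simp only [mem_filter, mem_univ, true_and, Fintype.mem_piFinset, Finset.ext_iff]
    refine forall_congr' fun a => ?_
    split_ifs with ha <;> simp [ha]
  rw [this, Fintype.card_piFinset, ← card_compl]
  simp [apply_ite, prod_ite, filter_notMem_eq_sdiff, compl_eq_univ_sdiff, card_sdiff]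

theorem sum_apply_card_fiber_eq_sum_choose {α β M : Type*} [Fintype α] [DecidableEq α] [Fintype β]
    [DecidableEq β] [AddCommMonoid M] (b : β) (φ : ℕ → M) :
    ∑ f : α → β, φ #{a | f a = b} =
      ∑ j ∈ range (Fintype.card α + 1),
        ((Fintype.card α).choose j * (Fintype.card β - 1) ^ (Fintype.card α - j)) • φ j := by
  rw [← sum_fiberwise_of_maps_to (t := (univ : Finset α).powerset)
    (g := fun f : α → β => ({a | f a = b} : Finset α)) (fun f _ => mem_powerset.2 (subset_univ _))]
  have (s : Finset α) : ∑ f : α → β with ({a | f a = b} : Finset α) = s, φ #{a | f a = b}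
      = ((Fintype.card β - 1) ^ (Fintype.card α - #s)) • φ #s := by
    rw [sum_congr rfl fun f hf => by rw [(mem_filter.1 hf).2], sum_const, card_filter_fiber_eq_pow]
  simp only [this, card_univ, mul_smul,
    sum_powerset_apply_card fun j => ((Fintype.card β - 1) ^ (Fintype.card α - j)) • φ j]

theorem card_genRank_eq_div {m n g : ℕ} (F : Type*) [Field F] [Fintype F] (j : Fin n) :
    (Nat.card {ω : Fin m → Fin n × (Fin g → F) // genRank m n g F ω j = g} : ℝ) /
        Nat.card (Fin m → Fin n × (Fin g → F)) =
      (∑ f : Fin m → Fin n, fullRankProportion F {p // f p = j} g) /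
        Fintype.card (Fin m → Fin n) := by
  let e := Equiv.arrowProdEquivProdArrow (Fin m) (fun _ => Fin n) fun _ => Fin g → F
  let P (f : Fin m → Fin n) (v : Fin m → Fin g → F) :=
    (Matrix.of (Subtype.restrict (fun p => f p = j) v)).rank = g
  have hsplit : {ω // genRank m n g F ω j = g} ≃
      {x : (Fin m → Fin n) × (Fin m → Fin g → F) // P x.1 x.2} :=
    e.subtypeEquiv fun _ => Iff.rfl
  rw [Nat.card_congr hsplit, Nat.card_congr e, card_subtype_prod_div P,
    Nat.card_eq_fintype_card (α := Fin m → Fin n)]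
  congr 2 with f
  exact card_subtype_restrict_div (f · = j) (fun w => (Matrix.of w).rank = g)

theorem sum_binomial_eq_card_div {m n g : ℕ} (hn : 0 < n) (j : Fin n) :
    ∑ k ∈ Icc g m, (m.choose k : ℝ) * (1 / n) ^ k * (1 - 1 / n) ^ (m - k) =
      (∑ f : Fin m → Fin n, if g ≤ Fintype.card {p // f p = j} then (1 : ℝ) else 0) /
        Fintype.card (Fin m → Fin n) := by
  simp_rw [Fintype.card_subtype]
  rw [sum_apply_card_fiber_eq_sum_choose j fun k => if g ≤ k then (1 : ℝ) else 0]
  simp only [Fintype.card_fin, Fintype.card_fun, nsmul_eq_mul, mul_ite, mul_one, mul_zero,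
    ← sum_filter, sum_div]
  have hrange : {k ∈ range (m + 1) | g ≤ k} = Icc g m := by ext; simp; omega
  rw [hrange]
  refine sum_congr rfl fun k hk => ?_
  obtain ⟨d, rfl⟩ := Nat.exists_eq_add_of_le (mem_Icc.1 hk).2
  have hn' : (n : ℝ) ≠ 0 := by positivity
  rw [Nat.add_sub_cancel_left, Nat.cast_mul, Nat.cast_pow, Nat.cast_pow, Nat.cast_sub hn,
    Nat.cast_one, pow_add, one_sub_div hn', div_pow, div_pow, one_pow]
  field_simp

theorem stmt_3_general (m n g : ℕ) (hn : 0 < n) (ε : ℝ) (hε : 0 < ε) :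
    ∃ q0 : ℕ, ∀ (F : Type) [Field F] [Fintype F], q0 ≤ Fintype.card F →
      |(Nat.card {ω : Fin m → Fin n × (Fin g → F) //
            genRank m n g F ω ⟨0, hn⟩ = g} : ℝ) /
          (Nat.card (Fin m → Fin n × (Fin g → F)) : ℝ) -
        ∑ j ∈ Finset.Icc g m, (m.choose j : ℝ) * (1 / n) ^ j * (1 - 1 / n) ^ (m - j)| < ε := by
  refine ⟨⌈g / ε⌉₊ + 1, fun F _ _ hq => ?_⟩
  have hgq : (g : ℝ) / Fintype.card F < ε := by
    rw [div_lt_iff₀ (mod_cast Fintype.card_pos), ← div_lt_iff₀' hε]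
    exact (Nat.le_ceil _).trans_lt (mod_cast hq)
  have : Nonempty (Fin m → Fin n) := ⟨fun _ => ⟨0, hn⟩⟩
  rw [card_genRank_eq_div, sum_binomial_eq_card_div hn]
  exact (abs_sum_div_card_sub_sum_div_card_le fun f =>
    abs_fullRankProportion_sub_indicator_le).trans_lt hgq

/-- As the field size tends to infinity, the probability that a fixed generation is
full rank (rank `g`) converges to the binomial probability that at least `g` of the `m`
packets are assigned to that generation. -/
theorem stmt_3 (m n g : ℕ) (hm : 0 < m) (hn : 0 < n) (hg : 0 < g) (ε : ℝ) (hε : 0 < ε) :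
    ∃ q0 : ℕ, ∀ (F : Type) [Field F] [Fintype F], q0 ≤ Fintype.card F →
      |(Nat.card {ω : Fin m → Fin n × (Fin g → F) //
            genRank m n g F ω ⟨0, hn⟩ = g} : ℝ) /
          (Nat.card (Fin m → Fin n × (Fin g → F)) : ℝ) -
        ∑ j ∈ Finset.Icc g m, (m.choose j : ℝ) * (1 / n) ^ j * (1 - 1 / n) ^ (m - j)| < ε :=
  stmt_3_general m n g hn ε hε
end

section
/- Fix a real number r > 0 and a natural number i. Then the binomial probability mass converges to the Poisson probability mass: lim_{n→∞} C(⌈r·n⌉, i)·(1/n)^i·(1−1/n)^(⌈r·n⌉−i) = e^(−r)·r^i / i!. -/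
/-!
Only `⌈r n⌉ / n → r` matters. Writing `C(m, i) / nⁱ = (∏_{j<i} (m - j) / n) / i!`, each factor
tends to `r`; and `(1 - 1/n)^k = ((1 - 1/n)^n)^(k/n)` tends to `(e⁻¹)^r` by continuity of `rpow`,
since `k / n → r` also for `k = ⌈r n⌉ - i`.
-/

open Filter Topology Finset Real

section PoissonLimit

variable {r : ℝ}

theorem tendsto_natCeil_mul_div_atTop (hr : 0 ≤ r) :
    Tendsto (fun n : ℕ => (⌈r * n⌉₊ : ℝ) / n) atTop (𝓝 r) := by
  have upper : Tendsto (fun n : ℕ => r + 1 / n) atTop (𝓝 r) := by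
    simpa using tendsto_one_div_atTop_nhds_zero_nat.const_add r
  refine tendsto_of_tendsto_of_tendsto_of_le_of_le' tendsto_const_nhds upper ?_ ?_ <;>
    filter_upwards [eventually_gt_atTop 0] with n hn <;>
    have hn' : (0 : ℝ) < n := Nat.cast_pos.mpr hn
  · rw [le_div_iff₀ hn']
    exact Nat.le_ceil _
  · rw [div_le_iff₀ hn', add_mul, one_div_mul_cancel hn'.ne']
    exact (Nat.ceil_lt_add_one (by positivity)).le

theorem tendsto_sub_const_div_of_tendsto_div {u : ℕ → ℝ}
    (hu : Tendsto (fun n => u n / n) atTop (𝓝 r)) (c : ℝ) :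
    Tendsto (fun n => (u n - c) / n) atTop (𝓝 r) := by
  simpa [sub_div] using hu.sub (tendsto_const_div_atTop_nhds_zero_nat c)

theorem tendsto_natSub_div_of_tendsto_div {m : ℕ → ℕ}
    (hm : Tendsto (fun n => (m n : ℝ) / n) atTop (𝓝 r)) (i : ℕ) :
    Tendsto (fun n => ((m n - i : ℕ) : ℝ) / n) atTop (𝓝 r) := by
  refine tendsto_of_tendsto_of_tendsto_of_le_of_le
    (tendsto_sub_const_div_of_tendsto_div hm i) hm (fun n => ?_) (fun n => ?_)
  · gcongr
    rw [sub_le_iff_le_add]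
    rw [← Nat.cast_add]
    exact Nat.cast_le.mpr le_tsub_add
  · gcongr
    exact Nat.sub_le _ _

theorem tendsto_one_sub_one_div_pow_of_tendsto_div {k : ℕ → ℕ}
    (hk : Tendsto (fun n => (k n : ℝ) / n) atTop (𝓝 r)) :
    Tendsto (fun n : ℕ => (1 - 1 / (n : ℝ)) ^ k n) atTop (𝓝 (exp (-r))) := by
  have base : Tendsto (fun n : ℕ => (1 - 1 / (n : ℝ)) ^ n) atTop (𝓝 (exp (-1))) := by
    simpa [sub_eq_add_neg, neg_div] using tendsto_one_add_div_pow_exp (-1)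
  have := base.rpow hk (Or.inl (exp_pos _).ne')
  rw [← exp_mul, neg_one_mul] at this
  refine this.congr' ?_
  filter_upwards [eventually_gt_atTop 0] with n hn
  have hn' : (1 : ℝ) ≤ n := Nat.one_le_cast.mpr hn
  have hbase : 0 ≤ 1 - 1 / (n : ℝ) := by
    rw [sub_nonneg]
    exact div_le_one_of_le₀ hn' (by positivity)
  rw [← rpow_natCast, ← rpow_mul hbase, mul_div_cancel₀ _ (by positivity), rpow_natCast]

theorem cast_choose_mul_one_div_pow (m i n : ℕ) :
    (m.choose i : ℝ) * (1 / n) ^ i = (∏ j ∈ range i, ((m : ℝ) - j) / n) / i.factorial := by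
  rw [Nat.cast_choose_eq_descPochhammer_div, descPochhammer_eval_eq_prod_range,
    prod_div_distrib, prod_const, card_range]
  ring

theorem tendsto_choose_mul_one_div_pow_of_tendsto_div {m : ℕ → ℕ}
    (hm : Tendsto (fun n => (m n : ℝ) / n) atTop (𝓝 r)) (i : ℕ) :
    Tendsto (fun n : ℕ => ((m n).choose i : ℝ) * (1 / n) ^ i) atTop
      (𝓝 (r ^ i / i.factorial)) := by
  simp only [cast_choose_mul_one_div_pow]
  refine Tendsto.div_const ?_ _
  simpa using tendsto_finsetProd (range i)
    fun j _ => tendsto_sub_const_div_of_tendsto_div hm j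

theorem tendsto_binomial_pmf_of_tendsto_div {m : ℕ → ℕ}
    (hm : Tendsto (fun n => (m n : ℝ) / n) atTop (𝓝 r)) (i : ℕ) :
    Tendsto (fun n : ℕ => ((m n).choose i : ℝ) * (1 / n) ^ i * (1 - 1 / n) ^ (m n - i))
      atTop (𝓝 (exp (-r) * r ^ i / i.factorial)) := by
  rw [mul_div_assoc, mul_comm]
  exact (tendsto_choose_mul_one_div_pow_of_tendsto_div hm i).mul
    (tendsto_one_sub_one_div_pow_of_tendsto_div (tendsto_natSub_div_of_tendsto_div hm i))

end PoissonLimit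

/-- Poisson limit of the binomial: for fixed `r > 0` and `i`,
`C(⌈rn⌉, i) (1/n)^i (1 - 1/n)^(⌈rn⌉ - i) → e^(-r) r^i / i!` as `n → ∞`. -/
theorem stmt_6 (r : ℝ) (hr : 0 < r) (i : ℕ) :
    Tendsto (fun n : ℕ =>
        ((Nat.ceil (r * n)).choose i : ℝ) * (1 / n) ^ i *
          (1 - 1 / n) ^ (Nat.ceil (r * n) - i))
      atTop (nhds (Real.exp (-r) * r ^ i / (i.factorial : ℝ))) :=
  tendsto_binomial_pmf_of_tendsto_div (tendsto_natCeil_mul_div_atTop hr.le) i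
end

section
/- Let g be a positive integer, r0 ≥ 0 and c ≥ 0 real numbers, and P(x) = Σ_{i=2}^{D} p_i x^i any polynomial with nonnegative coefficients, and define f(x) = 1 − e^(−(r0 + c·P′(x)))·Σ_{i=0}^{g−1} (r0 + c·P′(x))^i / i!. Then sup_{x ∈ [0,1]} f(x) ≤ 1 − e^(−(r0 + c·P′(1)))·Σ_{i=0}^{g−1} (r0 + c·P′(1))^i / i! < 1. Consequently, for every x0 ∈ [0,1) the convergence condition 'x < f(x) for all x ∈ (x0, 1)' fails; i.e., with a finite-average-degree polynomial outer code the density evolution cannot drive the fraction of full rank generations all the way to 1, so a pre-code is necessary. -/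
/-- The derivative `P'(x) = Σ_{i=2}^{D} i p_i x^(i-1)` of the check degree distribution
polynomial `P(x) = Σ_{i=2}^{D} p_i x^i`. -/
noncomputable def Pderiv (D : ℕ) (p : ℕ → ℝ) (x : ℝ) : ℝ :=
  ∑ i ∈ Finset.Icc 2 D, (i : ℝ) * p i * x ^ (i - 1)

/-- The density-evolution map of Gamma network codes,
`f(x) = 1 - e^(-(r0 + c P'(x))) Σ_{j=0}^{g-1} (r0 + c P'(x))^j / j!`,
written with `c = g (1 - R)`. -/
noncomputable def deMap (g : ℕ) (r0 c : ℝ) (D : ℕ) (p : ℕ → ℝ) (x : ℝ) : ℝ :=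
  1 - Real.exp (-(r0 + c * Pderiv D p x)) *
        ∑ j ∈ Finset.range g, (r0 + c * Pderiv D p x) ^ j / (j.factorial : ℝ)

/-! A polynomial with nonnegative coefficients has a derivative that is nonnegative and
monotone on `[0, ∞)`, while `t ↦ P(Poisson(t) < g)` decreases in `t` (its derivative is minus
the Poisson weight `e^(-t) t^(g-1)/(g-1)!`) and stays positive. Hence `f = 1 - P(Poisson(·) < g)`
composed with `r0 + c P'` is maximal at `x = 1`, where it is still `< 1`; so no `x` close
enough to `1` satisfies `x < f(x)`. -/

open Set

section PoissonProbLT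

/-- `P(N < g)` for `N` Poisson distributed with mean `t`. -/
noncomputable def poissonProbLT (g : ℕ) (t : ℝ) : ℝ :=
  Real.exp (-t) * ∑ j ∈ Finset.range g, t ^ j / (j.factorial : ℝ)

lemma deMap_eq_one_sub_poissonProbLT (g : ℕ) (r0 c : ℝ) (D : ℕ) (p : ℕ → ℝ) (x : ℝ) :
    deMap g r0 c D p x = 1 - poissonProbLT g (r0 + c * Pderiv D p x) :=
  rfl

lemma poissonProbLT_succ (n : ℕ) (t : ℝ) :
    poissonProbLT (n + 1) t = poissonProbLT n t + Real.exp (-t) * (t ^ n / n.factorial) := by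
  simp only [poissonProbLT, Finset.sum_range_succ, mul_add]

lemma hasDerivAt_poissonProbLT_succ (n : ℕ) (t : ℝ) :
    HasDerivAt (poissonProbLT (n + 1)) (-(Real.exp (-t) * t ^ n / n.factorial)) t := by
  have hexp : HasDerivAt (fun t : ℝ => Real.exp (-t)) (-Real.exp (-t)) t := by
    simpa using (hasDerivAt_neg t).exp
  induction n with
  | zero =>
    have h : poissonProbLT 1 = fun t => Real.exp (-t) := by
      funext s; simp [poissonProbLT]
    simpa [h] using hexp
  | succ n ih =>
    have hpow : HasDerivAt (fun t : ℝ => t ^ (n + 1) / (n + 1).factorial)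
        (((n + 1 : ℕ) : ℝ) * t ^ n / (n + 1).factorial) t := by
      simpa using (hasDerivAt_pow (n + 1) t).div_const ((n + 1).factorial : ℝ)
    rw [show poissonProbLT (n + 1 + 1) = fun t =>
        poissonProbLT (n + 1) t + Real.exp (-t) * (t ^ (n + 1) / (n + 1).factorial) from
      funext (poissonProbLT_succ (n + 1))]
    refine (ih.add (hexp.mul hpow)).congr_deriv ?_
    -- the Poisson weight of `n` cancels, leaving minus the weight of `n + 1`
    rw [Nat.factorial_succ, Nat.cast_mul]
    field_simp
    ring

lemma poissonProbLT_antitoneOn (g : ℕ) : AntitoneOn (poissonProbLT g) (Ici 0) := by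
  cases g with
  | zero => simp [poissonProbLT, AntitoneOn]
  | succ n =>
    refine antitoneOn_of_hasDerivWithinAt_nonpos (convex_Ici 0)
      (fun t _ => (hasDerivAt_poissonProbLT_succ n t).continuousAt.continuousWithinAt)
      (fun t _ => (hasDerivAt_poissonProbLT_succ n t).hasDerivWithinAt) fun t ht => ?_
    rw [interior_Ici] at ht
    have : 0 ≤ Real.exp (-t) * t ^ n / n.factorial := by
      have := ht.out.le
      positivity
    linarith

lemma poissonProbLT_pos {g : ℕ} (hg : 0 < g) {t : ℝ} (ht : 0 ≤ t) : 0 < poissonProbLT g t := by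
  refine mul_pos (Real.exp_pos _) (Finset.sum_pos' (fun j _ => by positivity) ?_)
  exact ⟨0, Finset.mem_range.2 hg, by simp⟩

end PoissonProbLT

section Pderiv

variable {D : ℕ} {p : ℕ → ℝ}

lemma Pderiv_nonneg (hp : ∀ i, 0 ≤ p i) {x : ℝ} (hx : 0 ≤ x) : 0 ≤ Pderiv D p x :=
  Finset.sum_nonneg fun i _ => by have := hp i; positivity

lemma Pderiv_monotoneOn (hp : ∀ i, 0 ≤ p i) : MonotoneOn (Pderiv D p) (Ici 0) :=
  fun _ hx _ _ hxy => Finset.sum_le_sum fun i _ =>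
    mul_le_mul_of_nonneg_left (pow_le_pow_left₀ hx hxy _)
      (mul_nonneg (Nat.cast_nonneg i) (hp i))

end Pderiv

lemma deMap_le_deMap_one (g : ℕ) {r0 c : ℝ} (hr0 : 0 ≤ r0) (hc : 0 ≤ c) (D : ℕ) {p : ℕ → ℝ}
    (hp : ∀ i, 0 ≤ p i) {x : ℝ} (hx : x ∈ Icc (0 : ℝ) 1) :
    deMap g r0 c D p x ≤ deMap g r0 c D p 1 := by
  have hrate : ∀ {y : ℝ}, 0 ≤ y → 0 ≤ r0 + c * Pderiv D p y := fun hy =>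
    add_nonneg hr0 (mul_nonneg hc (Pderiv_nonneg hp hy))
  have hmono : r0 + c * Pderiv D p x ≤ r0 + c * Pderiv D p 1 :=
    add_le_add_right (mul_le_mul_of_nonneg_left
      (Pderiv_monotoneOn hp hx.1 (mem_Ici.2 zero_le_one) hx.2) hc) r0
  rw [deMap_eq_one_sub_poissonProbLT, deMap_eq_one_sub_poissonProbLT]
  linarith [poissonProbLT_antitoneOn g (hrate hx.1) (hrate zero_le_one) hmono]

lemma exists_mem_Ioo_le_of_le_of_lt_one {f : ℝ → ℝ} {x0 M : ℝ} (hx0 : x0 < 1) (hM : M < 1)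
    (hf : ∀ x ∈ Ioo x0 1, f x ≤ M) : ∃ x ∈ Ioo x0 1, f x ≤ x := by
  have hmax : max x0 M < 1 := max_lt hx0 hM
  have hx : (max x0 M + 1) / 2 ∈ Ioo x0 1 :=
    ⟨by linarith [le_max_left x0 M], by linarith⟩
  exact ⟨_, hx, (hf _ hx).trans (by linarith [le_max_right x0 M])⟩

/-- With a finite-degree polynomial outer code the density-evolution map is bounded on
`[0,1]` by its value at `1`, which is strictly less than `1`; consequently the
convergence condition `x < f(x)` for all `x ∈ (x0, 1)` fails for every `x0 ∈ [0, 1)`,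
so the density evolution cannot drive the fraction of full rank generations to `1`
and a pre-code is necessary. -/
theorem stmt_13 (g : ℕ) (hg : 0 < g) (r0 c : ℝ) (hr0 : 0 ≤ r0) (hc : 0 ≤ c)
    (D : ℕ) (p : ℕ → ℝ) (hp : ∀ i, 0 ≤ p i) :
    (∀ x ∈ Set.Icc (0 : ℝ) 1, deMap g r0 c D p x ≤ deMap g r0 c D p 1) ∧
    deMap g r0 c D p 1 < 1 ∧
    ∀ x0 ∈ Set.Ico (0 : ℝ) 1, ¬ (∀ x ∈ Set.Ioo x0 1, x < deMap g r0 c D p x) := by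
  have hle : ∀ x ∈ Icc (0 : ℝ) 1, deMap g r0 c D p x ≤ deMap g r0 c D p 1 :=
    fun x hx => deMap_le_deMap_one g hr0 hc D hp hx
  have hlt : deMap g r0 c D p 1 < 1 := by
    rw [deMap_eq_one_sub_poissonProbLT]
    have := poissonProbLT_pos hg (add_nonneg hr0 (mul_nonneg hc (Pderiv_nonneg (D := D) hp zero_le_one)))
    linarith
  refine ⟨hle, hlt, fun x0 hx0 hconv => ?_⟩
  obtain ⟨x, hx, hfx⟩ := exists_mem_Ioo_le_of_le_of_lt_one hx0.2 hlt
    fun x hx => hle x ⟨hx0.1.trans hx.1.le, hx.2.le⟩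
  exact (hconv x hx).not_ge hfx
end
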